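/- Let λ be a special type B partition of 2n+1. Take the padded column list of λ (padded with zeros to even length); repeatedly delete two equal adjacent entries occupying positions 2t+1 and 2t until no such pair remains; then repeatedly delete two equal adjacent entries of even value occupying positions 2t and 2t−1 until no such pair remains. Then the last entry of the resulting list equals 0 and every other entry of the resulting list is odd. (This is the assertion, implicit in Propositions 2.4 and 3.2 of the paper, that the reduced column string a''_{2q+1} ≥ a''_{2q} ≥ ⋯ ≥ a''_0 of a special orbit of SO(2n+1,ℂ), obtained after separating the ν column pairs and the even μ column pairs, consists of odd numbers together with a''_0 = 0.) -/

import Mathlib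

/-- `l` is a partition of `N`: a weakly decreasing list of positive integers with sum `N`. -/
def IsPartitionOf (N : ℕ) (l : List ℕ) : Prop :=
  l.Pairwise (· ≥ ·) ∧ (∀ x ∈ l, 0 < x) ∧ l.sum = N

/-- the `j`-th column length `c_j(λ) = #{i : λ_i ≥ j}`. -/
def colLen (l : List ℕ) (j : ℕ) : ℕ := l.countP (fun x => decide (j ≤ x))

/-- the transpose partition, as the list `c_1 ≥ c_2 ≥ ⋯ ≥ c_{λ_1}` of column lengths. -/
def transposeList (l : List ℕ) : List ℕ :=
  (List.range (l.foldr max 0)).map (fun j => colLen l (j + 1))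

/-- pad a list with one zero at the end if necessary so that its length is even. -/
def padToEven (c : List ℕ) : List ℕ := if Even c.length then c else c ++ [0]

/-- Delete two equal adjacent entries occupying positions `2t+1` and `2t` for some `t ≥ 0`
(positions in a list of length `m` are numbered `m-1, …, 1, 0` from first to last). -/
def delStepE (L L' : List ℕ) : Prop :=
  ∃ (a : ℕ) (l₁ l₂ : List ℕ), Even l₂.length ∧ L = l₁ ++ a :: a :: l₂ ∧ L' = l₁ ++ l₂

/-- Delete two equal adjacent entries of even value at positions `2t` and `2t-1`, `t ≥ 1`. -/
def delStepOEvenVal (L L' : List ℕ) : Prop :=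
  ∃ (a : ℕ) (l₁ l₂ : List ℕ),
    Even a ∧ Odd l₂.length ∧ L = l₁ ++ a :: a :: l₂ ∧ L' = l₁ ++ l₂

/-!
The column list `T` of `λ` is weakly decreasing, consists of positive integers, sums to `2n+1`,
and (as `λ` is special) every even value occurs in it with even multiplicity; the last property
gives `length T ≡ sum T (mod 2)`, so `T` has odd length and is padded by a single `0`.
Deleting two equal adjacent entries keeps a list sorted and preserves the parity of every
multiplicity, so the final list contains `0` exactly once, necessarily at its end, and each
positive even value in it has even multiplicity. On sorted lists such deletions never create a
pair removable by the first rule, so at the end two adjacent copies of an even value would be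
removable by one of the two rules; hence no positive even value survives.
-/
theorem List.even_length_iff_even_sum_of_even_count {L : List ℕ}
    (h : ∀ e ∈ L, Even e → Even (L.count e)) : Even L.length ↔ Even L.sum := by
  have hcount : ∀ a ∈ L.toFinset, ((L.count a • a : ℕ) : ZMod 2) = L.count a := by
    intro a ha
    rcases Nat.even_or_odd a with hae | hao
    · rw [ZMod.natCast_eq_zero_iff_even.mpr (h a (List.mem_toFinset.mp ha) hae),
        smul_eq_mul, ZMod.natCast_eq_zero_iff_even.mpr (hae.mul_left _)]
    · rw [smul_eq_mul, Nat.cast_mul, ZMod.natCast_eq_one_iff_odd.mpr hao, mul_one]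
  have hmod : (L.length : ZMod 2) = L.sum := by
    rw [Finset.sum_list_count, ← Multiset.coe_card, ← Multiset.toFinset_sum_count_eq]
    push_cast
    simp only [List.toFinset_coe, Multiset.coe_count]
    exact (Finset.sum_congr rfl hcount).symm
  rw [← ZMod.natCast_eq_zero_iff_even, ← ZMod.natCast_eq_zero_iff_even, hmod]

lemma sum_range_map_ite_le (a : ℕ) :
    ∀ m, ((List.range m).map fun j => if j + 1 ≤ a then 1 else 0).sum = min a m
  | 0 => by simp
  | m + 1 => by
    rw [List.range_succ, List.map_append, List.sum_append, sum_range_map_ite_le a m]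
    simp only [List.map_cons, List.map_nil, List.sum_cons, List.sum_nil]
    split_ifs <;> omega

lemma sum_range_map_colLen {l : List ℕ} {m : ℕ} (h : ∀ x ∈ l, x ≤ m) :
    ((List.range m).map fun j => colLen l (j + 1)).sum = l.sum := by
  induction l with
  | nil => simp [colLen]
  | cons a t ih =>
    simp only [colLen, List.countP_cons, decide_eq_true_eq] at ih ⊢
    rw [List.sum_map_add, ih fun x hx => h x (List.mem_cons_of_mem a hx),
      sum_range_map_ite_le, min_eq_left (h a List.mem_cons_self), List.sum_cons, add_comm]

lemma sum_transposeList (l : List ℕ) : (transposeList l).sum = l.sum :=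
  sum_range_map_colLen fun _ hx => List.le_max_of_le' 0 hx le_rfl

lemma pos_of_mem_transposeList {l : List ℕ} {e : ℕ} (he : e ∈ transposeList l) : 0 < e := by
  obtain ⟨j, hj, rfl⟩ := List.mem_map.mp he
  rw [colLen, List.countP_pos_iff]
  by_contra! h
  have hle : l.foldr max 0 ≤ j := List.max_le_of_forall_le l j fun x hx => by simpa using h x hx
  exact (List.mem_range.mp hj).not_ge hle

lemma transposeList_pairwise_ge (l : List ℕ) : (transposeList l).Pairwise (· ≥ ·) := by
  refine List.pairwise_map.mpr (List.pairwise_lt_range.imp fun hij => ?_)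
  refine List.countP_mono_left fun x _ hx => ?_
  simp only [decide_eq_true_eq] at hx ⊢
  omega

lemma padToEven_transposeList {l : List ℕ} (hsum : Odd l.sum)
    (hspecial : ∀ e ∈ transposeList l, Even e → Even ((transposeList l).count e)) :
    padToEven (transposeList l) = transposeList l ++ [0] := by
  have hodd : ¬ Even (transposeList l).length := by
    rw [List.even_length_iff_even_sum_of_even_count hspecial, sum_transposeList,
      Nat.not_even_iff_odd]
    exact hsum
  rw [padToEven, if_neg hodd]

theorem List.exists_eq_append_cons_cons_of_two_le_count {α : Type*} [PartialOrder α]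
    [DecidableEq α] {L : List α} (hL : L.Pairwise (· ≥ ·)) {x : α} (hx : 2 ≤ L.count x) :
    ∃ p q, L = p ++ x :: x :: q := by
  obtain ⟨p, q, rfl, hp⟩ :=
    List.eq_append_cons_of_mem (List.count_pos_iff.mp (by omega : 0 < L.count x))
  have hq : x ∈ q := by
    rw [List.count_append, List.count_cons_self, List.count_eq_zero.mpr hp] at hx
    exact List.count_pos_iff.mp (by omega)
  obtain _ | ⟨y, q⟩ := q
  · simp at hq
  have hxyq := List.pairwise_cons.mp (List.pairwise_append.mp hL).2.1
  have hyx : x ≤ y := by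
    rcases List.mem_cons.mp hq with rfl | hxq
    · exact le_rfl
    · exact (List.pairwise_cons.mp hxyq.2).1 x hxq
  obtain rfl := le_antisymm (hxyq.1 y List.mem_cons_self) hyx
  exact ⟨p, q, rfl⟩

lemma List.exists_eq_append_zero_of_count_zero_eq_one {M : List ℕ} (hM : M.Pairwise (· ≥ ·))
    (h0 : M.count 0 = 1) : ∃ p, M = p ++ [0] ∧ 0 ∉ p := by
  obtain ⟨p, q, rfl, hp⟩ :=
    List.eq_append_cons_of_mem (List.count_pos_iff.mp (by omega : 0 < M.count 0))
  obtain _ | ⟨y, q⟩ := q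
  · exact ⟨p, rfl, hp⟩
  obtain rfl : y = 0 := Nat.le_zero.mp
    ((List.pairwise_cons.mp (List.pairwise_append.mp hM).2.1).1 y List.mem_cons_self)
  simp only [List.count_append, List.count_cons_self] at h0
  omega

section DelAdjPair

variable {α : Type*}

def DelAdjPair (L L' : List α) : Prop :=
  ∃ (a : α) (l₁ l₂ : List α), L = l₁ ++ a :: a :: l₂ ∧ L' = l₁ ++ l₂

lemma DelAdjPair.sublist {L L' : List α} (h : DelAdjPair L L') : L'.Sublist L := by
  obtain ⟨a, l₁, l₂, rfl, rfl⟩ := h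
  exact ((l₂.sublist_cons_self a).trans ((a :: l₂).sublist_cons_self a)).append_left l₁

lemma DelAdjPair.even_count_iff [DecidableEq α] {L L' : List α} (h : DelAdjPair L L') (e : α) :
    Even (L'.count e) ↔ Even (L.count e) := by
  obtain ⟨a, l₁, l₂, rfl, rfl⟩ := h
  simp only [List.count_append, List.count_cons]
  split <;> simp [parity_simps]

lemma sublist_of_reflTransGen_delAdjPair {L M : List α}
    (h : Relation.ReflTransGen DelAdjPair L M) : M.Sublist L := by
  induction h with
  | refl => exact List.Sublist.refl _
  | tail _ hKM ih => exact hKM.sublist.trans ih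

lemma even_count_iff_of_reflTransGen_delAdjPair [DecidableEq α] {L M : List α}
    (h : Relation.ReflTransGen DelAdjPair L M) (e : α) :
    Even (M.count e) ↔ Even (L.count e) := by
  induction h with
  | refl => rfl
  | tail _ hKM ih => exact (hKM.even_count_iff e).trans ih

end DelAdjPair

lemma DelAdjPair.of_delStepE {L L' : List ℕ} (h : delStepE L L') : DelAdjPair L L' :=
  let ⟨a, l₁, l₂, _, hL, hL'⟩ := h
  ⟨a, l₁, l₂, hL, hL'⟩

lemma DelAdjPair.of_delStepOEvenVal {L L' : List ℕ} (h : delStepOEvenVal L L') :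
    DelAdjPair L L' :=
  let ⟨a, l₁, l₂, _, _, hL, hL'⟩ := h
  ⟨a, l₁, l₂, hL, hL'⟩

lemma not_delStepE_of_delAdjPair {L L' : List ℕ} (hL : L.Pairwise (· ≥ ·))
    (hE : ∀ M, ¬ delStepE L M) (h : DelAdjPair L L') (M : List ℕ) : ¬ delStepE L' M := by
  obtain ⟨a, l₁, l₂, rfl, rfl⟩ := h
  rintro ⟨b, m₁, m₂, hm₂, hsplit, -⟩
  rcases List.append_eq_append_iff.mp hsplit with ⟨r, rfl, rfl⟩ | ⟨r, rfl, hr⟩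
  · exact hE _ ⟨b, l₁ ++ a :: a :: r, m₂, hm₂, by simp, rfl⟩
  rcases r with _ | ⟨c, _ | ⟨d, r⟩⟩
  · subst hr
    exact hE _ ⟨b, m₁ ++ [a, a], m₂, hm₂, by simp, rfl⟩
  · -- the new pair straddles the deleted one: `L = m₁ ++ b :: a :: a :: b :: m₂`, so `a = b`
    obtain ⟨hc, rfl⟩ : c = b ∧ l₂ = b :: m₂ := by simpa [eq_comm] using hr.symm
    subst c
    have hab : a = b := by
      simp only [List.append_assoc, List.singleton_append, List.pairwise_append,
        List.pairwise_cons, List.mem_cons] at hL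
      exact le_antisymm (hL.2.1.1 a (by simp)) (hL.2.1.2.1 b (by simp))
    subst hab
    exact hE _ ⟨a, m₁, a :: a :: m₂, by simpa [parity_simps] using hm₂, by simp, rfl⟩
  · obtain ⟨hc, hd, rfl⟩ : c = b ∧ d = b ∧ m₂ = r ++ l₂ := by
      simpa [eq_comm] using hr.symm
    subst c d
    exact hE _ ⟨b, m₁, r ++ a :: a :: l₂, by simpa [parity_simps] using hm₂, by simp, rfl⟩

lemma not_delStepE_of_reflTransGen_delAdjPair {L M : List ℕ} (hL : L.Pairwise (· ≥ ·))
    (hE : ∀ M', ¬ delStepE L M') (h : Relation.ReflTransGen DelAdjPair L M) :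
    ∀ M', ¬ delStepE M M' := by
  induction h with
  | refl => exact hE
  | tail hLK hKM ih =>
    exact not_delStepE_of_delAdjPair (hL.sublist (sublist_of_reflTransGen_delAdjPair hLK)) ih hKM

lemma count_le_one_of_not_delStep {M : List ℕ} (hM : M.Pairwise (· ≥ ·))
    (hE : ∀ M', ¬ delStepE M M') (hO : ∀ M', ¬ delStepOEvenVal M M') {x : ℕ} (hx : Even x) :
    M.count x ≤ 1 := by
  by_contra! h
  obtain ⟨p, q, hpq⟩ := List.exists_eq_append_cons_cons_of_two_le_count hM h
  rcases Nat.even_or_odd q.length with hq | hq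
  · exact hE _ ⟨x, p, q, hq, hpq, rfl⟩
  · exact hO _ ⟨x, p, q, hx, hq, hpq, rfl⟩

lemma getLast?_eq_zero_and_odd_of_normal {M : List ℕ} (hM : M.Pairwise (· ≥ ·))
    (hEnf : ∀ M', ¬ delStepE M M') (hOnf : ∀ M', ¬ delStepOEvenVal M M')
    (h0 : M.count 0 = 1) (heven : ∀ x, 0 < x → Even x → Even (M.count x)) :
    M.getLast? = some 0 ∧ ∀ x ∈ M.dropLast, Odd x := by
  obtain ⟨p, rfl, hp⟩ := List.exists_eq_append_zero_of_count_zero_eq_one hM h0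
  refine ⟨List.getLast?_concat, fun x hx => Nat.not_even_iff_odd.mp fun hxe => ?_⟩
  rw [List.dropLast_concat] at hx
  have hle := count_le_one_of_not_delStep hM hEnf hOnf hxe
  have hpos : 0 < (p ++ [0]).count x := List.count_pos_iff.mpr (List.mem_append_left _ hx)
  obtain ⟨k, hk⟩ := heven x (Nat.pos_of_ne_zero (ne_of_mem_of_not_mem hx hp)) hxe
  omega

theorem getLast?_eq_zero_and_odd_of_reduced {T M₁ M₂ : List ℕ} (hT : T.Pairwise (· ≥ ·))
    (hpos : ∀ e ∈ T, 0 < e) (heven : ∀ e ∈ T, Even e → Even (T.count e))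
    (hE : Relation.ReflTransGen delStepE (T ++ [0]) M₁) (hEnf : ∀ M', ¬ delStepE M₁ M')
    (hO : Relation.ReflTransGen delStepOEvenVal M₁ M₂)
    (hOnf : ∀ M', ¬ delStepOEvenVal M₂ M') :
    M₂.getLast? = some 0 ∧ ∀ x ∈ M₂.dropLast, Odd x := by
  have hCM₁ := Relation.ReflTransGen.mono (fun _ _ => DelAdjPair.of_delStepE) _ _ hE
  have hM₁M₂ := Relation.ReflTransGen.mono (fun _ _ => DelAdjPair.of_delStepOEvenVal) _ _ hO
  have hCM₂ := hCM₁.trans hM₁M₂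
  have hC : (T ++ [0]).Pairwise (· ≥ ·) := List.pairwise_append.mpr ⟨hT, by simp, by simp⟩
  have hM₁ : M₁.Pairwise (· ≥ ·) := hC.sublist (sublist_of_reflTransGen_delAdjPair hCM₁)
  have hT0 : T.count 0 = 0 := List.count_eq_zero.mpr fun h => (hpos 0 h).false
  refine getLast?_eq_zero_and_odd_of_normal
    (hM₁.sublist (sublist_of_reflTransGen_delAdjPair hM₁M₂))
    (not_delStepE_of_reflTransGen_delAdjPair hM₁ hEnf hM₁M₂) hOnf ?_ fun x hx0 hxe => ?_
  · have hle := (sublist_of_reflTransGen_delAdjPair hCM₂).count_le 0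
    have hodd := (even_count_iff_of_reflTransGen_delAdjPair hCM₂ 0).not
    simp only [List.count_append, hT0, List.count_singleton_self] at hle hodd
    grind
  · rw [even_count_iff_of_reflTransGen_delAdjPair hCM₂, List.count_append,
      List.count_eq_zero.mpr (show x ∉ [0] by simpa using hx0.ne'), add_zero]
    by_cases hxT : x ∈ T
    · exact heven x hxT hxe
    · rw [List.count_eq_zero.mpr hxT]
      exact Even.zero

theorem typeB_reducedColumnString_odd_general (n : ℕ) (l : List ℕ)
    (hpart : IsPartitionOf (2 * n + 1) l)
    (hspecial : ∀ e ∈ transposeList l, Even e → Even ((transposeList l).count e)) :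
    ∀ M₁ M₂ : List ℕ,
      Relation.ReflTransGen delStepE (padToEven (transposeList l)) M₁ →
      (∀ M', ¬ delStepE M₁ M') →
      Relation.ReflTransGen delStepOEvenVal M₁ M₂ →
      (∀ M', ¬ delStepOEvenVal M₂ M') →
      M₂.getLast? = some 0 ∧ ∀ x ∈ M₂.dropLast, Odd x := by
  intro M₁ M₂ hE hEnf hO hOnf
  have hsum : Odd l.sum := hpart.2.2 ▸ odd_two_mul_add_one n
  rw [padToEven_transposeList hsum hspecial] at hE
  exact getLast?_eq_zero_and_odd_of_reduced (transposeList_pairwise_ge l)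
    (fun _ => pos_of_mem_transposeList) hspecial hE hEnf hO hOnf

/-- Let `l` be a special type B partition of `2n+1`.  Take the padded column list of `l`
(padded with zeros to even length); repeatedly delete two equal adjacent entries at
positions `2t+1` and `2t` until no such pair remains; then repeatedly delete two equal
adjacent entries of even value at positions `2t` and `2t-1` until no such pair remains.
Then the last entry of the resulting list equals `0` and every other entry is odd. -/
theorem typeB_reducedColumnString_odd (n : ℕ) (l : List ℕ)
    (hpart : IsPartitionOf (2 * n + 1) l)
    (hB : ∀ e ∈ l, Even e → Even (l.count e))
    (hspecial : ∀ e ∈ transposeList l, Even e → Even ((transposeList l).count e)) :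
    ∀ M₁ M₂ : List ℕ,
      Relation.ReflTransGen delStepE (padToEven (transposeList l)) M₁ →
      (∀ M', ¬ delStepE M₁ M') →
      Relation.ReflTransGen delStepOEvenVal M₁ M₂ →
      (∀ M', ¬ delStepOEvenVal M₂ M') →
      M₂.getLast? = some 0 ∧ ∀ x ∈ M₂.dropLast, Odd x :=
  typeB_reducedColumnString_odd_general n l hpart hspecial
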